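/- Let F be a field and s ∈ ℕ. The shifted succinct Shpilka–Volkovich generator with parameter k = ⌊log₂ s⌋ is a generator for s-sparse polynomials: for every nonzero F ∈ F[X₁,…,X_N] with at most s monomials (N = 2^n), F(G_{n,⌊log₂ s⌋}(y,z) + 1) ≠ 0. -/

import Mathlib

/-!
Setting the variables outside `U` to `1` (`oneOutside U`) keeps `P` nonzero exactly when
`P(x + 1)` has a monomial supported in `U`. Such a `U` with `#U ≤ log₂ s` exists: two distinct
monomials of `P` differ in the exponent of some `X j`, one of the two corresponding
`X j`-components of `P` (`weightedHomogeneousComponent (Pi.single j 1)`) has at most `s / 2`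
monomials, and once `X j` is kept this component cannot cancel against the others. On the
generator side, placing the sets of `U` on distinct summands of
`Q_{n,k}` via `z_i = 𝟙_{T_i}`, `y_i = X_{T_i} - 1` specializes `G_{n,k} + 1` to exactly this
substitution, so `P(G_{n,k} + 1) ≠ 0` as soon as `k ≥ #U`.
-/

open MvPolynomial

/-- Multilinear monomial exponent vector of a subset. -/
noncomputable def mlMon {n : ℕ} (S : Finset (Fin n)) : Fin n →₀ ℕ :=
  ∑ j ∈ S, Finsupp.single j 1

/-- The succinct Shpilka–Volkovich polynomial `Q_{n,k}(y,z,x)`, with genuine variables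
`y_i` and `z_{i,j}` in the coefficient ring `F[y,z]`. -/
noncomputable def svQ (F : Type*) [Field F] (n k : ℕ) :
    MvPolynomial (Fin n) (MvPolynomial (Fin k ⊕ Fin k × Fin n) F) :=
  ∑ i : Fin k, MvPolynomial.C (MvPolynomial.X (Sum.inl i)) *
    ∏ j : Fin n,
      (MvPolynomial.C (MvPolynomial.X (Sum.inr (i, j))) * MvPolynomial.X j +
        MvPolynomial.C (1 - MvPolynomial.X (Sum.inr (i, j))))

/-- The succinct SV generator: the coordinate indexed by a subset `T ⊆ [n]`. -/
noncomputable def svG (F : Type*) [Field F] (n k : ℕ) (T : Finset (Fin n)) :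
    MvPolynomial (Fin k ⊕ Fin k × Fin n) F :=
  (svQ F n k).coeff (mlMon T)

open Finset

namespace MvPolynomial

variable {R σ : Type*} [CommSemiring R]

lemma weightedHomogeneousComponent_monomial {M : Type*} [AddCommMonoid M] [DecidableEq M]
    (w : σ → M) (d : M) (m : σ →₀ ℕ) (c : R) :
    weightedHomogeneousComponent w d (monomial m c) =
      if Finsupp.weight w m = d then monomial m c else 0 := by
  split_ifs with h
  · exact weightedHomogeneousComponent_eq_self (isWeightedHomogeneous_monomial _ _ _ h)
  · refine weightedHomogeneousComponent_eq_zero' _ _ fun m' hm' => ?_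
    rwa [mem_singleton.mp (support_monomial_subset hm')]

variable [DecidableEq σ]

noncomputable def oneOutside (U : Finset σ) : MvPolynomial σ R →ₐ[R] MvPolynomial σ R :=
  aeval fun i => if i ∈ U then X i else 1

lemma oneOutside_X (U : Finset σ) (i : σ) :
    oneOutside U (X i : MvPolynomial σ R) = if i ∈ U then X i else 1 :=
  aeval_X _ _

lemma oneOutside_monomial (U : Finset σ) (m : σ →₀ ℕ) (c : R) :
    oneOutside U (monomial m c) = monomial (m.filter (· ∈ U)) c := by
  rw [oneOutside, aeval_monomial, monomial_eq, algebraMap_eq, Finsupp.prod, Finsupp.prod,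
    Finsupp.support_filter, prod_filter]
  congr 1
  refine prod_congr rfl fun i _ => ?_
  split_ifs with hi <;> simp [hi]

lemma oneOutside_oneOutside {U V : Finset σ} (h : V ⊆ U) (P : MvPolynomial σ R) :
    oneOutside V (oneOutside U P) = oneOutside V P := by
  rw [← AlgHom.comp_apply]
  congr 1
  refine algHom_ext fun i => ?_
  by_cases hi : i ∈ U
  · simp [oneOutside_X, hi]
  · simp [oneOutside_X, hi, show i ∉ V from fun hV => hi (h hV)]

lemma oneOutside_weightedHomogeneousComponent {U : Finset σ} {j : σ} (hj : j ∈ U) (d : ℕ)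
    (P : MvPolynomial σ R) :
    oneOutside U (weightedHomogeneousComponent (Pi.single j 1) d P) =
      weightedHomogeneousComponent (Pi.single j 1) d (oneOutside U P) := by
  induction P using MvPolynomial.induction_on' with
  | monomial m c =>
    simp only [oneOutside_monomial, weightedHomogeneousComponent_monomial,
      Finsupp.weight_single_one_apply, Finsupp.filter_apply_pos _ _ hj]
    split_ifs <;> simp [oneOutside_monomial]
  | add P Q hP hQ => simp only [map_add, hP, hQ]

lemma exists_weightedHomogeneousComponent_ne_zero_card_support_le_half
    {P : MvPolynomial σ R} {s : ℕ} (hs : #P.support ≤ s) {a b : σ →₀ ℕ}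
    (ha : a ∈ P.support) (hb : b ∈ P.support) {j : σ} (hab : a j ≠ b j) :
    ∃ d, weightedHomogeneousComponent (Pi.single j 1) d P ≠ 0 ∧
      #(weightedHomogeneousComponent (Pi.single j 1) d P).support ≤ s / 2 := by
  have hsupport (d : ℕ) : (weightedHomogeneousComponent (Pi.single j 1) d P).support =
      {m ∈ P.support | m j = d} := by
    simp only [support_weightedHomogeneousComponent, Finsupp.weight_single_one_apply]
  have hne {m} (hm : m ∈ P.support) :
      weightedHomogeneousComponent (Pi.single j 1) (m j) P ≠ 0 :=
    support_nonempty.mp ⟨m, by rw [hsupport]; exact mem_filter.mpr ⟨hm, rfl⟩⟩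
  have hsum : #{m ∈ P.support | m j = a j} + #{m ∈ P.support | m j = b j} ≤ s := by
    rw [← card_union_of_disjoint (disjoint_filter.mpr fun m _ ha hb => hab (ha.symm.trans hb))]
    exact (card_le_card (union_subset (filter_subset _ _) (filter_subset _ _))).trans hs
  rcases le_total #{m ∈ P.support | m j = a j} #{m ∈ P.support | m j = b j} with h | h
  · exact ⟨a j, hne ha, by rw [hsupport]; omega⟩
  · exact ⟨b j, hne hb, by rw [hsupport]; omega⟩

theorem exists_card_le_log_oneOutside_ne_zero {P : MvPolynomial σ R} (hP : P ≠ 0) {s : ℕ}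
    (hs : #P.support ≤ s) : ∃ U : Finset σ, #U ≤ Nat.log 2 s ∧ oneOutside U P ≠ 0 := by
  induction s using Nat.strong_induction_on generalizing P with
  | _ s ih =>
  by_cases hmono : ∃ a ∈ P.support, ∃ b ∈ P.support, a ≠ b
  · obtain ⟨a, ha, b, hb, hab⟩ := hmono
    obtain ⟨j, hj⟩ := Finsupp.ne_iff.mp hab
    obtain ⟨d, hQ, hQs⟩ :=
      exists_weightedHomogeneousComponent_ne_zero_card_support_le_half hs ha hb hj
    have hs2 : 2 ≤ s := (one_lt_card.mpr ⟨a, ha, b, hb, hab⟩).trans_le hs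
    obtain ⟨V, hV, hQV⟩ := ih (s / 2) (by omega) hQ hQs
    refine ⟨insert j V, ?_, fun h => hQV ?_⟩
    · have := Nat.log_div_base 2 s
      have := Nat.log_pos (b := 2) (by norm_num) hs2
      have := card_insert_le j V
      omega
    · rw [← oneOutside_oneOutside (subset_insert j V),
        oneOutside_weightedHomogeneousComponent (mem_insert_self j V), h, map_zero, map_zero]
  · push Not at hmono
    obtain ⟨a, ha⟩ := support_nonempty.mpr hP
    refine ⟨∅, by simp, ?_⟩
    rw [eq_monomial_of_support_subset_singleton fun m hm => hmono m hm a ha, oneOutside_monomial]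
    exact (monomial_eq_zero.not).mpr (mem_support_iff.mp ha)

end MvPolynomial

section
variable {n : ℕ}

lemma mlMon_apply (S : Finset (Fin n)) (j : Fin n) : mlMon S j = if j ∈ S then 1 else 0 := by
  simp [mlMon, Finsupp.single_apply]

lemma mlMon_injective : Function.Injective (mlMon (n := n)) := fun S T h => by
  ext j
  have := DFunLike.congr_fun h j
  simp only [mlMon_apply] at this
  split_ifs at this <;> simp_all

lemma prod_X_eq_monomial_mlMon {R : Type*} [CommSemiring R] (S : Finset (Fin n)) :
    ∏ j ∈ S, (X j : MvPolynomial (Fin n) R) = monomial (mlMon S) 1 := by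
  rw [mlMon, monomial_sum_one]
  rfl

variable {F : Type*} [Field F] {R : Type*} [CommRing R] [Algebra F R] {k : ℕ}

/-- The point `y = c`, `z_{i,·} = 𝟙_{T i}` at which the `i`-th summand of `Q_{n,k}` becomes
`c i • x^{T i}`. -/
def svPoint (T : Fin k → Finset (Fin n)) (c : Fin k → R) : Fin k ⊕ Fin k × Fin n → R :=
  Sum.elim c fun p => if p.2 ∈ T p.1 then 1 else 0

lemma map_aeval_svPoint_svQ (T : Fin k → Finset (Fin n)) (c : Fin k → R) :
    MvPolynomial.map (aeval (svPoint T c) : MvPolynomial (Fin k ⊕ Fin k × Fin n) F →ₐ[F] R)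
      (svQ F n k) = ∑ i, monomial (mlMon (T i)) (c i) := by
  set φ : MvPolynomial (Fin k ⊕ Fin k × Fin n) F →+* R := ↑(aeval (R := F) (svPoint T c))
  rw [svQ, map_sum]
  refine sum_congr rfl fun i _ => ?_
  have hfactor (j : Fin n) :
      map φ (C (X (Sum.inr (i, j))) * X j + C (1 - X (Sum.inr (i, j)))) =
        if j ∈ T i then X j else 1 := by
    split_ifs with hj <;> simp [φ, svPoint, hj]
  rw [map_mul, map_prod, map_C, prod_congr rfl fun j _ => hfactor j, prod_ite_mem, univ_inter,
    prod_X_eq_monomial_mlMon, C_mul_monomial, mul_one]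
  simp [φ, svPoint]

lemma aeval_svPoint_svG (T : Fin k → Finset (Fin n)) (c : Fin k → R) (S : Finset (Fin n)) :
    aeval (svPoint T c) (svG F n k S) = ∑ i, if T i = S then c i else 0 := by
  rw [svG, ← RingHom.coe_coe, ← coeff_map, map_aeval_svPoint_svQ, coeff_sum]
  simp only [coeff_monomial, mlMon_injective.eq_iff]

theorem aeval_svG_add_one_ne_zero {U : Finset (Finset (Fin n))} (hU : #U ≤ k)
    {P : MvPolynomial (Finset (Fin n)) F} (hP : oneOutside U P ≠ 0) :
    aeval (fun S => svG F n k S + 1) P ≠ 0 := by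
  obtain ⟨ι⟩ : Nonempty (U ↪ Fin k) := by
    rwa [Function.Embedding.nonempty_iff_card_le, Fintype.card_coe, Fintype.card_fin]
  set T : Fin k → Finset (Fin n) := Function.extend ι Subtype.val fun _ => ∅
  set c : Fin k → MvPolynomial (Finset (Fin n)) F := Function.extend ι (fun S => X S.1 - 1) 0
  have hpoint (S : Finset (Fin n)) :
      aeval (svPoint T c) (svG F n k S + 1) = if S ∈ U then X S else 1 := by
    have hsum :
        (∑ i, if T i = S then c i else 0) = ∑ S' : U, if S'.1 = S then X S'.1 - 1 else 0 :=
      (Fintype.sum_of_injective ι ι.injective _ _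
        (fun i hi => by simp [c, Function.extend_apply' _ _ _ fun ⟨S', h⟩ => hi ⟨S', h⟩])
        (fun S' => by simp [T, c, ι.injective.extend_apply])).symm
    rw [map_add, map_one, aeval_svPoint_svG, hsum,
      sum_coe_sort U fun S' => if S' = S then X S' - 1 else 0, sum_ite_eq']
    split_ifs <;> ring
  have hcomp : (aeval (svPoint T c)).comp (aeval fun S => svG F n k S + 1) = oneOutside U :=
    algHom_ext fun S => by rw [AlgHom.comp_apply, aeval_X, hpoint, oneOutside_X]
  intro h
  apply hP
  rw [← hcomp, AlgHom.comp_apply, h, map_zero]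

end

/-- the shifted succinct SV generator with parameter `k = ⌊log₂ s⌋` hits
every nonzero `s`-sparse polynomial on `N = 2^n` variables. -/
theorem stmt11 (F : Type*) [Field F] (n s : ℕ)
    (P : MvPolynomial (Finset (Fin n)) F) (hP : P ≠ 0) (hs : P.support.card ≤ s) :
    MvPolynomial.aeval (fun T : Finset (Fin n) => svG F n (Nat.log 2 s) T + 1) P ≠ 0 := by
  obtain ⟨U, hU, hPU⟩ := exists_card_le_log_oneOutside_ne_zero hP hs
  exact aeval_svG_add_one_ne_zero hU hPU
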